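/- Let φ ∈ ℝ and γ ∈ (0, π/2). Let A = L_φ(t₁) and B = L_{φ+γ}(t₂), where t₁ ≥ 0 and t₂ ≥ (1 − cos γ)/sin γ. Then for every χ ∈ [φ, φ+γ] there exists s ∈ [0,1] such that the point (1−s)·A + s·B inspects P_χ; in other words, the straight-line movement from A to B inspects all points P_χ with χ ∈ [φ, φ+γ]. -/

import Mathlib

/-!
The endpoint `L_{φ+γ}(t₂)` alone already inspects the whole arc. A point `X` inspects `P_χ`
as soon as `⟪X, P_χ⟫ ≥ 1`: the segment from `X` to `P_χ` then stays beyond the tangent at `P_χ`.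
For `X = L_{φ+γ}(t)` that inner product is `cos θ + t sin θ` with `θ = φ + γ - χ ∈ [0, γ]`,
and `cos θ + t sin θ ≥ 1` means `t ≥ tan (θ/2)`, which is monotone in `θ`;
the hypothesis on `t₂` is exactly `t₂ ≥ tan (γ/2)`.
-/

open Real Set

/-- The point of the unit circle at angle `φ`. -/
noncomputable def Ppt (φ : ℝ) : EuclideanSpace ℝ (Fin 2) := !₂[Real.cos φ, Real.sin φ]

/-- `A` inspects the perimeter point `P_φ` if no convex combination of `A` and `P_φ`
lies in the open unit disk. -/
def Inspects (A : EuclideanSpace ℝ (Fin 2)) (φ : ℝ) : Prop :=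
  ∀ s ∈ Set.Icc (0:ℝ) 1, 1 ≤ ‖(1 - s) • A + s • Ppt φ‖


/-- The point at parameter `t` on the tangent line to the unit circle at `P_φ`. -/
noncomputable def Lpt (φ t : ℝ) : EuclideanSpace ℝ (Fin 2) :=
  !₂[Real.cos φ + t * Real.sin φ, Real.sin φ - t * Real.cos φ]

lemma inner_Ppt (X : EuclideanSpace ℝ (Fin 2)) (χ : ℝ) :
    inner ℝ X (Ppt χ) = X 0 * cos χ + X 1 * sin χ := by
  simp [Ppt, PiLp.inner_apply, Fin.sum_univ_two, mul_comm]

lemma norm_Ppt (χ : ℝ) : ‖Ppt χ‖ = 1 := by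
  rw [EuclideanSpace.norm_eq, Fin.sum_univ_two]
  simp [Ppt]

lemma inner_Lpt_Ppt (φ t χ : ℝ) :
    inner ℝ (Lpt φ t) (Ppt χ) = cos (φ - χ) + t * sin (φ - χ) := by
  rw [inner_Ppt, cos_sub, sin_sub]
  simp only [Fin.isValue, Lpt, Matrix.cons_val_zero, Matrix.cons_val_one, Matrix.cons_val_fin_one]
  ring

lemma inspects_of_one_le_inner {X : EuclideanSpace ℝ (Fin 2)} {χ : ℝ}
    (h : 1 ≤ inner ℝ X (Ppt χ)) : Inspects X χ := by
  rintro s ⟨hs₀, hs₁⟩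
  calc (1 : ℝ) ≤ (1 - s) * inner ℝ X (Ppt χ) + s * ‖Ppt χ‖ ^ 2 := by
        rw [norm_Ppt]; nlinarith
    _ = inner ℝ ((1 - s) • X + s • Ppt χ) (Ppt χ) := by
        rw [inner_add_left, real_inner_smul_left, real_inner_smul_left, real_inner_self_eq_norm_sq]
    _ ≤ ‖(1 - s) • X + s • Ppt χ‖ := by
        simpa [norm_Ppt] using real_inner_le_norm ((1 - s) • X + s • Ppt χ) (Ppt χ)

/-- The inequality `tan (θ/2) ≤ tan (γ/2)`, cleared of denominators. -/
lemma sin_mul_one_sub_cos_le {θ γ : ℝ} (hθ : θ ∈ Icc 0 γ) (hγ : γ ≤ π) :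
    sin γ * (1 - cos θ) ≤ (1 - cos γ) * sin θ := by
  obtain ⟨hθ₀, hθγ⟩ := hθ
  have hsplit : γ = (γ - θ) + θ := by ring
  have hsin_θ : 0 ≤ sin θ := sin_nonneg_of_nonneg_of_le_pi hθ₀ (by linarith)
  have hsin_rest : 0 ≤ sin (γ - θ) := sin_nonneg_of_nonneg_of_le_pi (by linarith) (by linarith)
  have key : (1 - cos γ) * sin θ - sin γ * (1 - cos θ)
      = sin (γ - θ) * (1 - cos θ) + sin θ * (1 - cos (γ - θ)) := by
    rw [hsplit, sin_add, cos_add, add_sub_cancel_right]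
    linear_combination sin (γ - θ) * sin_sq_add_cos_sq θ
  linarith [mul_nonneg hsin_rest (sub_nonneg.2 (cos_le_one θ)),
    mul_nonneg hsin_θ (sub_nonneg.2 (cos_le_one (γ - θ)))]

lemma one_le_cos_add_mul_sin {θ γ t : ℝ} (hθ : θ ∈ Icc 0 γ) (hγ : γ ∈ Ioo 0 π)
    (ht : 1 - cos γ ≤ t * sin γ) : 1 ≤ cos θ + t * sin θ := by
  have hsin_γ : 0 < sin γ := sin_pos_of_pos_of_lt_pi hγ.1 hγ.2
  have hsin_θ : 0 ≤ sin θ := sin_nonneg_of_nonneg_of_le_pi hθ.1 (by linarith [hθ.2, hγ.2])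
  have hscaled : sin γ * (1 - cos θ) ≤ sin γ * (t * sin θ) := calc
    sin γ * (1 - cos θ) ≤ (1 - cos γ) * sin θ := sin_mul_one_sub_cos_le hθ hγ.2.le
    _ ≤ t * sin γ * sin θ := mul_le_mul_of_nonneg_right ht hsin_θ
    _ = sin γ * (t * sin θ) := by ring
  linarith [le_of_mul_le_mul_left hscaled hsin_γ]

lemma Lpt_inspects {φ γ t χ : ℝ} (hγ : γ ∈ Ioo 0 π) (ht : 1 - cos γ ≤ t * sin γ)
    (hχ : χ ∈ Icc (φ - γ) φ) : Inspects (Lpt φ t) χ := by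
  refine inspects_of_one_le_inner ?_
  rw [inner_Lpt_Ppt]
  exact one_le_cos_add_mul_sin ⟨by linarith [hχ.2], by linarith [hχ.1]⟩ hγ ht

theorem segment_inspects_sector_general (φ γ t₁ t₂ : ℝ) (hγ : γ ∈ Set.Ioo 0 (π/2))
    (ht₂ : (1 - Real.cos γ) / Real.sin γ ≤ t₂) :
    ∀ χ ∈ Set.Icc φ (φ + γ), ∃ s ∈ Set.Icc (0:ℝ) 1,
      Inspects ((1 - s) • Lpt φ t₁ + s • Lpt (φ + γ) t₂) χ := by
  intro χ hχ
  have hγ' : γ ∈ Ioo 0 π := ⟨hγ.1, by linarith [hγ.2, pi_pos]⟩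
  have ht : 1 - cos γ ≤ t₂ * sin γ :=
    (div_le_iff₀ (sin_pos_of_pos_of_lt_pi hγ'.1 hγ'.2)).1 ht₂
  refine ⟨1, right_mem_Icc.2 zero_le_one, ?_⟩
  rw [sub_self, zero_smul, one_smul, zero_add]
  exact Lpt_inspects hγ' ht ⟨by linarith [hχ.1], hχ.2⟩

theorem segment_inspects_sector (φ γ t₁ t₂ : ℝ) (hγ : γ ∈ Set.Ioo 0 (π/2))
    (ht₁ : 0 ≤ t₁) (ht₂ : (1 - Real.cos γ) / Real.sin γ ≤ t₂) :
    ∀ χ ∈ Set.Icc φ (φ + γ), ∃ s ∈ Set.Icc (0:ℝ) 1,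
      Inspects ((1 - s) • Lpt φ t₁ + s • Lpt (φ + γ) t₂) χ :=
  segment_inspects_sector_general φ γ t₁ t₂ hγ ht₂
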